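/- Injectivity of the anti-Wick symbol map: if A, B are bounded continuous symbols on ℂⁿ and the Toeplitz operators Q(A) and Q(B) on the Bargmann space coincide, then the Gaussian-smoothed functions coincide: ∫ e^{-|ξ-w|²} A(ξ) dξ = ∫ e^{-|ξ-w|²} B(ξ) dξ for all w ∈ ℂⁿ; hence if A − B is continuous and its Gaussian transform vanishes identically then A = B. -/

import Mathlib

/-!
The coherent states `e_w ξ = exp (hip ξ w)` are antiholomorphic and square integrable against
`exp (-nsq ξ)`, and `toeplitz n A e_w z = π⁻ⁿ ∫ exp (-|ξ|² + ⟨z, ξ⟩ + ⟨ξ, w⟩) A ξ dξ`. So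
`Q(A) = Q(B)` makes these integrals agree for all `z, w`. On the diagonal `z = w` the kernel is
`exp (|w|² - |ξ - w|²)`, which gives the equality of Gaussian transforms. Off the diagonal,
`z = πiζ`, `w = -πiζ` turns the kernel into `exp (-|ξ|²) exp (-2πi Re ⟨ξ, ζ⟩)`, so the Fourier
transform of the continuous integrable function `exp (-|ξ|²) (A - B)` vanishes; by Fourier
inversion `A = B`.
-/

open MeasureTheory
open scoped ComplexConjugate BigOperators

noncomputable def hip {n : ℕ} (x y : Fin n → ℂ) : ℂ := ∑ i, conj (x i) * y i

noncomputable def nsq {n : ℕ} (z : Fin n → ℂ) : ℝ := ∑ i, Complex.normSq (z i)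

def IsAntiholo {n : ℕ} (f : (Fin n → ℂ) → ℂ) : Prop :=
  Differentiable ℂ (fun w : Fin n → ℂ => f (fun i => conj (w i)))

noncomputable def toeplitz (n : ℕ) (A : (Fin n → ℂ) → ℂ) (Ψ : (Fin n → ℂ) → ℂ) :
    (Fin n → ℂ) → ℂ :=
  fun z => (Real.pi : ℂ) ^ (-(n : ℤ)) *
    ∫ ξ : Fin n → ℂ,
      Complex.exp (-(nsq ξ : ℝ)) * Complex.exp (hip z ξ) * A ξ * Ψ ξ

open scoped RealInnerProductSpace FourierTransform

theorem Continuous.eq_zero_of_fourier_eq_zero {V E : Type*} [NormedAddCommGroup V]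
    [InnerProductSpace ℝ V] [FiniteDimensional ℝ V] [MeasurableSpace V] [BorelSpace V]
    [NormedAddCommGroup E] [NormedSpace ℂ E] [CompleteSpace E] {f : V → E}
    (hc : Continuous f) (hf : Integrable f) (h : 𝓕 f = 0) : f = 0 := by
  have hinv := hc.fourierInv_fourier_eq hf (h ▸ integrable_zero V E volume)
  rw [← hinv, h]
  ext v
  simp [Real.fourierInv_eq]

section Hip

variable {n : ℕ}

theorem conj_hip (x y : Fin n → ℂ) : conj (hip x y) = hip y x := by
  simp [hip, mul_comm]

theorem re_hip_comm (x y : Fin n → ℂ) : (hip x y).re = (hip y x).re := by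
  rw [← conj_hip, Complex.conj_re]

theorem hip_add_hip_swap (x y : Fin n → ℂ) : hip x y + hip y x = (2 * (hip x y).re : ℝ) := by
  rw [← conj_hip x y, Complex.add_conj]

theorem hip_smul_left (c : ℂ) (x y : Fin n → ℂ) : hip (c • x) y = conj c * hip x y := by
  simp [hip, Finset.mul_sum, mul_assoc]

theorem hip_smul_right (c : ℂ) (x y : Fin n → ℂ) : hip x (c • y) = c * hip x y := by
  simp [hip, Finset.mul_sum, mul_left_comm]

theorem hip_zero_left (y : Fin n → ℂ) : hip 0 y = 0 := by
  simp [hip]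

theorem hip_zero_right (x : Fin n → ℂ) : hip x 0 = 0 := by
  simp [hip]

theorem re_hip_self (x : Fin n → ℂ) : (hip x x).re = nsq x := by
  simp [hip, nsq, Complex.re_sum, Complex.normSq_apply, Complex.mul_re]

theorem nsq_sub (ξ w : Fin n → ℂ) : nsq (ξ - w) = nsq ξ + nsq w - 2 * (hip w ξ).re := by
  simp only [nsq, hip, Pi.sub_apply, Complex.normSq_sub, Complex.re_sum, Finset.mul_sum,
    Finset.sum_sub_distrib, Finset.sum_add_distrib, mul_comm (conj (w _))]

theorem continuous_nsq : Continuous (nsq : (Fin n → ℂ) → ℝ) := by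
  unfold nsq; fun_prop

end Hip

/-- `ℂⁿ` realified as a Euclidean space; through it Mathlib's Gaussian integrals and Fourier
inversion, which live on real inner product spaces, reach `ℂⁿ`. -/
noncomputable def euclideanEquiv (n : ℕ) : EuclideanSpace ℝ (Fin n ⊕ Fin n) ≃ᵐ (Fin n → ℂ) :=
  (MeasurableEquiv.toLp 2 _).symm.trans <|
  (MeasurableEquiv.sumPiEquivProdPi _).trans <|
  (MeasurableEquiv.arrowProdEquivProdArrow ℝ ℝ (Fin n)).symm.trans <|
  MeasurableEquiv.piCongrRight fun _ => Complex.measurableEquivRealProd.symm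

section EuclideanEquiv

variable {n : ℕ}

theorem euclideanEquiv_apply (x : EuclideanSpace ℝ (Fin n ⊕ Fin n)) (i : Fin n) :
    euclideanEquiv n x i = ⟨x (.inl i), x (.inr i)⟩ := rfl

theorem measurePreserving_euclideanEquiv (n : ℕ) :
    MeasurePreserving (euclideanEquiv n) volume volume :=
  (volume_preserving_pi fun _ => Complex.volume_preserving_equiv_real_prod.symm).comp <|
    (volume_measurePreserving_arrowProdEquivProdArrow ℝ ℝ (Fin n)).symm.comp <|
    (volume_measurePreserving_sumPiEquivProdPi _).comp <|
    EuclideanSpace.volume_preserving_symm_measurableEquiv_toLp _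

theorem continuous_euclideanEquiv : Continuous (euclideanEquiv n) := by
  refine continuous_pi fun i => ?_
  change Continuous fun x : EuclideanSpace ℝ (Fin n ⊕ Fin n) =>
    Complex.equivRealProdCLM.symm (x (.inl i), x (.inr i))
  fun_prop

theorem re_hip_euclideanEquiv (x y : EuclideanSpace ℝ (Fin n ⊕ Fin n)) :
    (hip (euclideanEquiv n x) (euclideanEquiv n y)).re = ⟪x, y⟫ := by
  simp [hip, Complex.re_sum, euclideanEquiv_apply, Complex.mul_re, PiLp.inner_apply,
    Fintype.sum_sum_type, Finset.sum_add_distrib, mul_comm]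

theorem nsq_euclideanEquiv (x : EuclideanSpace ℝ (Fin n ⊕ Fin n)) :
    nsq (euclideanEquiv n x) = ‖x‖ ^ 2 := by
  rw [← re_hip_self, re_hip_euclideanEquiv, real_inner_self_eq_norm_sq]

end EuclideanEquiv

noncomputable def bargmannKernel {n : ℕ} (z w ξ : Fin n → ℂ) : ℂ :=
  Complex.exp (-(nsq ξ : ℂ) + hip z ξ + hip ξ w)

section BargmannKernel

variable {n : ℕ}

theorem isAntiholo_cexp_hip (w : Fin n → ℂ) : IsAntiholo fun ξ => Complex.exp (hip ξ w) := by
  simp only [IsAntiholo, hip, Complex.conj_conj]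
  fun_prop

theorem toeplitz_cexp_hip (A : (Fin n → ℂ) → ℂ) (z w : Fin n → ℂ) :
    toeplitz n A (fun ξ => Complex.exp (hip ξ w)) z
      = (Real.pi : ℂ) ^ (-(n : ℤ)) * ∫ ξ, bargmannKernel z w ξ * A ξ := by
  simp only [toeplitz, bargmannKernel, Complex.exp_add]
  congr 2 with ξ
  ring

theorem continuous_bargmannKernel (z w : Fin n → ℂ) : Continuous (bargmannKernel z w) := by
  unfold bargmannKernel hip
  have := continuous_nsq (n := n)
  fun_prop

theorem norm_bargmannKernel (z w ξ : Fin n → ℂ) :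
    ‖bargmannKernel z w ξ‖ = Real.exp (-nsq ξ + (hip z ξ).re + (hip w ξ).re) := by
  simp [bargmannKernel, Complex.norm_exp, re_hip_comm ξ w]

theorem integrable_bargmannKernel (z w : Fin n → ℂ) : Integrable (bargmannKernel z w) := by
  obtain ⟨a, rfl⟩ := (euclideanEquiv n).surjective z
  obtain ⟨b, rfl⟩ := (euclideanEquiv n).surjective w
  rw [← (measurePreserving_euclideanEquiv n).integrable_comp_emb
    (euclideanEquiv n).measurableEmbedding]
  refine (GaussianFourier.integrable_cexp_neg_mul_sq_norm_add (b := 1) (by simp) 1 (a + b)).congr'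
    ((continuous_bargmannKernel _ _).comp continuous_euclideanEquiv).aestronglyMeasurable
    (ae_of_all _ fun x => ?_)
  simp [norm_bargmannKernel, re_hip_euclideanEquiv, nsq_euclideanEquiv, Complex.norm_exp,
    inner_add_left, ← Complex.ofReal_pow, add_assoc]

theorem integrable_bargmannKernel_mul {S : (Fin n → ℂ) → ℂ} {M : ℝ}
    (hS : AEStronglyMeasurable S) (hM : ∀ ξ, ‖S ξ‖ ≤ M) (z w : Fin n → ℂ) :
    Integrable fun ξ => bargmannKernel z w ξ * S ξ :=
  (integrable_bargmannKernel z w).mul_bdd hS (ae_of_all _ hM)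

theorem integrable_exp_neg_nsq_mul_norm_cexp_hip_sq (w : Fin n → ℂ) :
    Integrable fun ζ : Fin n → ℂ => Real.exp (-nsq ζ) * ‖Complex.exp (hip ζ w)‖ ^ 2 := by
  refine (integrable_bargmannKernel w w).norm.congr (ae_of_all _ fun ζ => ?_)
  simp only [norm_bargmannKernel, Complex.norm_exp, re_hip_comm w ζ, Real.exp_add, sq,
    mul_assoc]

theorem ofReal_exp_neg_nsq_sub (ξ w : Fin n → ℂ) :
    (Real.exp (-nsq (ξ - w)) : ℂ) = Complex.exp (-(nsq w : ℂ)) * bargmannKernel w w ξ := by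
  rw [bargmannKernel, ← Complex.exp_add, Complex.ofReal_exp, add_assoc _ (hip w ξ),
    hip_add_hip_swap, nsq_sub]
  push_cast
  ring_nf

end BargmannKernel

section Fourier

variable {n : ℕ}

theorem bargmannKernel_smul_euclideanEquiv (v x : EuclideanSpace ℝ (Fin n ⊕ Fin n)) :
    bargmannKernel ((Real.pi * Complex.I) • euclideanEquiv n v)
        (-(Real.pi * Complex.I) • euclideanEquiv n v) (euclideanEquiv n x)
      = Complex.exp (↑(-2 * Real.pi * ⟪x, v⟫) * Complex.I)
        * bargmannKernel 0 0 (euclideanEquiv n x) := by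
  rw [bargmannKernel, bargmannKernel, ← Complex.exp_add]
  congr 1
  have hsum := hip_add_hip_swap (euclideanEquiv n v) (euclideanEquiv n x)
  rw [re_hip_euclideanEquiv, real_inner_comm] at hsum
  simp only [hip_smul_left, hip_smul_right, hip_zero_left, hip_zero_right, map_mul,
    Complex.conj_ofReal, Complex.conj_I]
  push_cast at hsum ⊢
  linear_combination (-(Real.pi : ℂ) * Complex.I) * hsum

theorem fourier_bargmannKernel_zero_mul (D : (Fin n → ℂ) → ℂ)
    (v : EuclideanSpace ℝ (Fin n ⊕ Fin n)) :
    𝓕 (fun x => bargmannKernel 0 0 (euclideanEquiv n x) * D (euclideanEquiv n x)) v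
      = ∫ ξ, bargmannKernel ((Real.pi * Complex.I) • euclideanEquiv n v)
          (-(Real.pi * Complex.I) • euclideanEquiv n v) ξ * D ξ := by
  rw [Real.fourier_eq', ← (measurePreserving_euclideanEquiv n).integral_comp
    (euclideanEquiv n).measurableEmbedding]
  simp only [bargmannKernel_smul_euclideanEquiv, smul_eq_mul, mul_assoc]

theorem eq_zero_of_integral_bargmannKernel_mul_eq_zero {D : (Fin n → ℂ) → ℂ} {M : ℝ}
    (hD : Continuous D) (hM : ∀ ξ, ‖D ξ‖ ≤ M)
    (h : ∀ z w, ∫ ξ, bargmannKernel z w ξ * D ξ = 0) : D = 0 := by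
  set f := fun x => bargmannKernel 0 0 (euclideanEquiv n x) * D (euclideanEquiv n x)
  have hf_cont : Continuous f :=
    ((continuous_bargmannKernel 0 0).mul hD).comp continuous_euclideanEquiv
  have hf_int : Integrable f :=
    (measurePreserving_euclideanEquiv n).integrable_comp_emb (euclideanEquiv n).measurableEmbedding
      |>.mpr (integrable_bargmannKernel_mul hD.aestronglyMeasurable hM 0 0)
  have hf : f = 0 := hf_cont.eq_zero_of_fourier_eq_zero hf_int <|
    funext fun v => (fourier_bargmannKernel_zero_mul D v).trans (h _ _)
  funext ξ
  obtain ⟨x, rfl⟩ := (euclideanEquiv n).surjective ξ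
  simpa [f, bargmannKernel] using congrFun hf x

end Fourier

/-- Injectivity of the anti-Wick symbol map: if the Toeplitz operators
`Q(A)` and `Q(B)` of bounded continuous symbols coincide on the Bargmann space, then the
Gaussian transforms coincide, `∫ e^{-|ξ-w|²} A(ξ) dξ = ∫ e^{-|ξ-w|²} B(ξ) dξ` for all `w`;
hence if the Gaussian transform of the (continuous) difference vanishes identically,
then `A = B`. -/
theorem antiwick_symbol_injective (n : ℕ) (A B : (Fin n → ℂ) → ℂ) (M : ℝ)
    (hA : Continuous A) (hB : Continuous B)
    (hMA : ∀ ξ, ‖A ξ‖ ≤ M) (hMB : ∀ ξ, ‖B ξ‖ ≤ M)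
    (hQ : ∀ Ψ : (Fin n → ℂ) → ℂ, IsAntiholo Ψ →
      Integrable (fun z : Fin n → ℂ => Real.exp (-(nsq z)) * ‖Ψ z‖ ^ 2) →
      toeplitz n A Ψ = toeplitz n B Ψ) :
    (∀ w : Fin n → ℂ,
        (∫ ξ : Fin n → ℂ, (Real.exp (-(nsq (ξ - w))) : ℂ) * A ξ)
          = ∫ ξ : Fin n → ℂ, (Real.exp (-(nsq (ξ - w))) : ℂ) * B ξ) ∧
    ((∀ w : Fin n → ℂ,
        (∫ ξ : Fin n → ℂ, (Real.exp (-(nsq (ξ - w))) : ℂ) * (A ξ - B ξ)) = 0)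
      → A = B) := by
  have hKernel : ∀ z w, ∫ ξ, bargmannKernel z w ξ * A ξ = ∫ ξ, bargmannKernel z w ξ * B ξ := by
    intro z w
    have h := congrFun (hQ _ (isAntiholo_cexp_hip w)
      (integrable_exp_neg_nsq_mul_norm_cexp_hip_sq w)) z
    rw [toeplitz_cexp_hip, toeplitz_cexp_hip] at h
    exact mul_left_cancel₀ (zpow_ne_zero _ (Complex.ofReal_ne_zero.mpr Real.pi_ne_zero)) h
  refine ⟨fun w => ?_, fun _ => ?_⟩
  · simp_rw [ofReal_exp_neg_nsq_sub, mul_assoc, integral_const_mul, hKernel w w]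
  · rw [← sub_eq_zero]
    refine eq_zero_of_integral_bargmannKernel_mul_eq_zero (hA.sub hB)
      (fun ξ => (norm_sub_le _ _).trans (add_le_add (hMA ξ) (hMB ξ))) fun z w => ?_
    simp_rw [Pi.sub_apply, mul_sub]
    rw [integral_sub (integrable_bargmannKernel_mul hA.aestronglyMeasurable hMA z w)
      (integrable_bargmannKernel_mul hB.aestronglyMeasurable hMB z w), hKernel, sub_self]
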